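/- arXiv:2104.06007 — 4 statements merged into one kernel-verified Lean document; each statement's English description precedes it below -/
import Mathlib

section
/- Let κ₁, κ₂ be real numbers with κ₁ ≥ 0 and κ₁ ≥ κ₂, and define f(x) = x · ln(1 − κ₁ + (κ₁ − κ₂)/x). Then f is concave on the set S = {x ∈ ℝ : x > 0 and x·(1 − κ₁) + κ₁ − κ₂ > 0}. -/
/-!
The objective is the perspective `(u, x) ↦ x * log (u / x)` of the concave function `log`,
restricted to the affine line `x ↦ (x * (1 - κ₁) + κ₁ - κ₂, x)`. Perspectives of concave functions
are concave: with `z = θ x + σ y`, the point `z⁻¹ (θ u + σ v)` is the convex combination of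
`x⁻¹ u` and `y⁻¹ v` with weights `θ x / z` and `σ y / z`.
-/

open Real Set

section Perspective

variable {E : Type*} [AddCommGroup E] [Module ℝ E] {s : Set E} {g : E → ℝ}

lemma inv_smul_add_eq_div_smul_add (θ σ : ℝ) {x y : ℝ} (hx : x ≠ 0) (hy : y ≠ 0) (u v : E) :
    (θ * x + σ * y)⁻¹ • (θ • u + σ • v) =
      (θ * x / (θ * x + σ * y)) • (x⁻¹ • u) + (σ * y / (θ * x + σ * y)) • (y⁻¹ • v) := by
  simp only [smul_add, smul_smul]
  congr 2 <;> field_simp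

lemma ConcaveOn.perspective (hg : ConcaveOn ℝ s g) :
    ConcaveOn ℝ {p : E × ℝ | 0 < p.2 ∧ p.2⁻¹ • p.1 ∈ s} (fun p => p.2 * g (p.2⁻¹ • p.1)) := by
  have combo : ∀ ⦃u v : E⦄ ⦃x y θ σ : ℝ⦄, 0 < x → 0 < y → 0 ≤ θ → 0 ≤ σ → θ + σ = 1 →
      x⁻¹ • u ∈ s → y⁻¹ • v ∈ s →
      0 < θ * x + σ * y ∧ (θ * x + σ * y)⁻¹ • (θ • u + σ • v) ∈ s ∧
        (θ * x) * g (x⁻¹ • u) + (σ * y) * g (y⁻¹ • v) ≤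
          (θ * x + σ * y) * g ((θ * x + σ * y)⁻¹ • (θ • u + σ • v)) := by
    intro u v x y θ σ hx hy hθ hσ hθσ hu hv
    have hz : 0 < θ * x + σ * y := convex_Ioi (0 : ℝ) hx hy hθ hσ hθσ
    have hsum : θ * x / (θ * x + σ * y) + σ * y / (θ * x + σ * y) = 1 := by
      rw [← add_div, div_self hz.ne']
    have hθ' : 0 ≤ θ * x / (θ * x + σ * y) := by positivity
    have hσ' : 0 ≤ σ * y / (θ * x + σ * y) := by positivity
    rw [inv_smul_add_eq_div_smul_add θ σ hx.ne' hy.ne']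
    refine ⟨hz, hg.1 hu hv hθ' hσ' hsum, ?_⟩
    calc (θ * x) * g (x⁻¹ • u) + (σ * y) * g (y⁻¹ • v)
        = (θ * x + σ * y) * (θ * x / (θ * x + σ * y) * g (x⁻¹ • u) +
            σ * y / (θ * x + σ * y) * g (y⁻¹ • v)) := by field_simp
      _ ≤ _ := mul_le_mul_of_nonneg_left (hg.2 hu hv hθ' hσ' hsum) hz.le
  refine ⟨fun ⟨u, x⟩ ⟨hx, hu⟩ ⟨v, y⟩ ⟨hy, hv⟩ θ σ hθ hσ hθσ => ?_,
    fun ⟨u, x⟩ ⟨hx, hu⟩ ⟨v, y⟩ ⟨hy, hv⟩ θ σ hθ hσ hθσ => ?_⟩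
  · obtain ⟨hz, hmem, -⟩ := combo hx hy hθ hσ hθσ hu hv
    exact ⟨hz, hmem⟩
  · simpa [smul_eq_mul, mul_assoc] using (combo hx hy hθ hσ hθσ hu hv).2.2

end Perspective

theorem concaveOn_mul_log_add_div (a b : ℝ) :
    ConcaveOn ℝ {x : ℝ | 0 < x ∧ 0 < x * a + b} (fun x => x * log (a + b / x)) := by
  let φ : ℝ →ᵃ[ℝ] ℝ × ℝ := (AffineMap.lineMap b (a + b)).prod (AffineMap.id ℝ ℝ)
  have hφ : ∀ x, φ x = (x * a + b, x) := by intro x; simp [φ, AffineMap.lineMap_apply]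
  have hpersp := strictConcaveOn_log_Ioi.concaveOn.perspective.comp_affineMap φ
  have hdom : φ ⁻¹' {p | 0 < p.2 ∧ p.2⁻¹ • p.1 ∈ Ioi 0} = {x | 0 < x ∧ 0 < x * a + b} := by
    ext x
    simp only [mem_preimage, hφ, mem_ofPred_eq, mem_Ioi, smul_eq_mul, and_congr_right_iff]
    exact fun hx => mul_pos_iff_of_pos_left (inv_pos.2 hx)
  rw [hdom] at hpersp
  refine hpersp.congr fun x hx => ?_
  simp only [Function.comp_apply, hφ, smul_eq_mul]
  congr 2
  field_simp [hx.1.ne']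

theorem objective_concave_general
    (κ₁ κ₂ : ℝ) :
    ConcaveOn ℝ {x : ℝ | 0 < x ∧ 0 < x * (1 - κ₁) + κ₁ - κ₂}
      (fun x : ℝ => x * Real.log (1 - κ₁ + (κ₁ - κ₂) / x)) := by
  simpa only [add_sub_assoc] using concaveOn_mul_log_add_div (1 - κ₁) (κ₁ - κ₂)

/-- Proposition 2: concavity of the time-sharing objective. -/
theorem objective_concave
    (κ₁ κ₂ : ℝ) (hκ₁ : 0 ≤ κ₁) (hκ : κ₂ ≤ κ₁) :
    ConcaveOn ℝ {x : ℝ | 0 < x ∧ 0 < x * (1 - κ₁) + κ₁ - κ₂}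
      (fun x : ℝ => x * Real.log (1 - κ₁ + (κ₁ - κ₂) / x)) :=
  objective_concave_general κ₁ κ₂
end

section
/- Let κ₁, κ₂ be real numbers with κ₁ > κ₂ and κ₁ ≠ κ₂. Define f(x) = x · ln(1 − κ₁ + (κ₁ − κ₂)/x). Then the derivative f′ is strictly decreasing on the set S = {x ∈ ℝ : x > 0 and x·(1 − κ₁) + κ₁ − κ₂ > 0}. -/
/-!
Write `f x = x * log (c + a / x)` with `c = 1 - κ₁` and `a = κ₁ - κ₂ ≠ 0`. On the domain
`{x | 0 < x ∧ 0 < x * c + a}`, an open interval, `f' x = log (c + a / x) - a / (x * c + a)` and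
`f'' x = -a ^ 2 / (x * (x * c + a) ^ 2) < 0`, so `f'` is strictly decreasing by the mean value
theorem.
-/

open Real Set

theorem hasDerivAt_add_div (a c x : ℝ) (hx : x ≠ 0) :
    HasDerivAt (fun x => c + a / x) (-a / x ^ 2) x := by
  simpa [div_eq_mul_inv, neg_div] using ((hasDerivAt_inv hx).const_mul a).const_add c

section

variable {a c : ℝ}

theorem add_div_eq_mul_add_div' {x : ℝ} (hx : x ≠ 0) : c + a / x = (x * c + a) / x := by
  rw [add_div_eq_mul_add_div c a hx, mul_comm]

theorem hasDerivAt_mul_log_add_div {x : ℝ} (hx : x ≠ 0) (hD : x * c + a ≠ 0) :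
    HasDerivAt (fun x => x * log (c + a / x)) (log (c + a / x) - a / (x * c + a)) x := by
  have hu : c + a / x = (x * c + a) / x := add_div_eq_mul_add_div' hx
  refine ((hasDerivAt_id x).mul ((hasDerivAt_add_div a c x hx).log
    (hu ▸ div_ne_zero hD hx))).congr_deriv ?_
  rw [hu, id_eq]
  field_simp
  ring

theorem hasDerivAt_log_add_div_sub_div {x : ℝ} (hx : x ≠ 0) (hD : x * c + a ≠ 0) :
    HasDerivAt (fun x => log (c + a / x) - a / (x * c + a))
      (-(a ^ 2 / (x * (x * c + a) ^ 2))) x := by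
  have hu : c + a / x = (x * c + a) / x := add_div_eq_mul_add_div' hx
  have hlin : HasDerivAt (fun x => x * c + a) c x := by
    simpa using ((hasDerivAt_id x).mul_const c).add_const a
  refine (((hasDerivAt_add_div a c x hx).log (hu ▸ div_ne_zero hD hx)).sub
    ((hasDerivAt_const x a).div hlin hD)).congr_deriv ?_
  rw [hu]
  field_simp
  ring

theorem isOpen_setOf_pos_and_pos_mul_add : IsOpen {x : ℝ | 0 < x ∧ 0 < x * c + a} :=
  (isOpen_lt continuous_const continuous_id).inter
    (isOpen_lt continuous_const ((continuous_mul_const c).add continuous_const))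

theorem convex_setOf_pos_and_pos_mul_add : Convex ℝ {x : ℝ | 0 < x ∧ 0 < x * c + a} := by
  have hhalf : Convex ℝ {x : ℝ | -a < x * c} :=
    convex_halfSpace_gt (IsLinearMap.isLinearMap_smul' c) (-a)
  have hset : {x : ℝ | 0 < x ∧ 0 < x * c + a} = Ioi 0 ∩ {x | -a < x * c} := by
    ext x
    exact and_congr_right' neg_lt_iff_pos_add.symm
  exact hset ▸ (convex_Ioi 0).inter hhalf

theorem strictAntiOn_log_add_div_sub_div (ha : a ≠ 0) :
    StrictAntiOn (fun x => log (c + a / x) - a / (x * c + a))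
      {x : ℝ | 0 < x ∧ 0 < x * c + a} := by
  have hderiv : ∀ x ∈ {x : ℝ | 0 < x ∧ 0 < x * c + a},
      HasDerivAt (fun x => log (c + a / x) - a / (x * c + a))
        (-(a ^ 2 / (x * (x * c + a) ^ 2))) x :=
    fun x hx => hasDerivAt_log_add_div_sub_div hx.1.ne' hx.2.ne'
  refine strictAntiOn_of_deriv_neg convex_setOf_pos_and_pos_mul_add
    (fun x hx => (hderiv x hx).continuousAt.continuousWithinAt) fun x hx => ?_
  rw [isOpen_setOf_pos_and_pos_mul_add.interior_eq] at hx
  obtain ⟨hx, hD⟩ := hx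
  rw [(hderiv x ⟨hx, hD⟩).deriv, neg_lt_zero]
  positivity

theorem strictAntiOn_deriv_mul_log_add_div (ha : a ≠ 0) :
    StrictAntiOn (deriv fun x => x * log (c + a / x)) {x : ℝ | 0 < x ∧ 0 < x * c + a} :=
  (strictAntiOn_log_add_div_sub_div ha).congr fun _ hx =>
    (hasDerivAt_mul_log_add_div hx.1.ne' hx.2.ne').deriv.symm

end

/-- Strict monotonicity of the first derivative on the domain. -/
theorem deriv_strictAntiOn
    (κ₁ κ₂ : ℝ) (hκ : κ₂ < κ₁) :
    StrictAntiOn (deriv (fun x : ℝ => x * Real.log (1 - κ₁ + (κ₁ - κ₂) / x)))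
      {x : ℝ | 0 < x ∧ 0 < x * (1 - κ₁) + κ₁ - κ₂} := by
  have hdomain : {x : ℝ | 0 < x ∧ 0 < x * (1 - κ₁) + κ₁ - κ₂} =
      {x : ℝ | 0 < x ∧ 0 < x * (1 - κ₁) + (κ₁ - κ₂)} := by
    simp only [add_sub_assoc]
  rw [hdomain]
  exact strictAntiOn_deriv_mul_log_add_div (sub_ne_zero.mpr hκ.ne')
end

section
/- Let κ₁, κ₂ be real numbers with κ₁ > 0 and κ₂ < κ₁, set θ₁ = (κ₁ − κ₂)/κ₁, and define f(x) = x · ln(1 − κ₁ + (κ₁ − κ₂)/x). Then there exists a unique x* in the open interval (0, θ₁) such that f′(x*) = 0. -/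
/-- Existence and uniqueness of the unconstrained maximizer x* in (0, θ₁). -/
theorem exists_unique_critical_point
    (κ₁ κ₂ : ℝ) (hκ₁ : 0 < κ₁) (hκ : κ₂ < κ₁)
    (θ₁ : ℝ) (hθ₁ : θ₁ = (κ₁ - κ₂) / κ₁) :
    ∃! x : ℝ, x ∈ Set.Ioo 0 θ₁ ∧
      deriv (fun x : ℝ => x * Real.log (1 - κ₁ + (κ₁ - κ₂) / x)) x = 0 := by
  set c := κ₁ - κ₂ with hc_def
  have hc : 0 < c := by rw [hc_def]; linarith
  set a := 1 - κ₁ with ha_def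
  have hθpos : 0 < θ₁ := by rw [hθ₁]; positivity
  have hcθ : c / θ₁ = κ₁ := by rw [hθ₁]; field_simp
  set φ : ℝ → ℝ := fun x => Real.log (a + c / x) - c / (a * x + c) with hφ_def
  -- basic bounds
  have hub : ∀ x ∈ Set.Ioc (0:ℝ) θ₁, (1:ℝ) ≤ a + c / x := by
    intro x hx
    have h1 : c / θ₁ ≤ c / x := by gcongr; exact hx.1; exact hx.2
    rw [hcθ] at h1
    rw [ha_def]; linarith
  have hq : ∀ x ∈ Set.Ioc (0:ℝ) θ₁, 0 < a * x + c := by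
    intro x hx
    have h1 := hub x hx
    have hx0 : x ≠ 0 := ne_of_gt hx.1
    have h2 : a * x + c = x * (a + c / x) := by field_simp
    rw [h2]
    have := hx.1
    nlinarith
  have haθ : a * θ₁ + c = θ₁ := by
    rw [ha_def, hθ₁, hc_def]; field_simp; ring
  -- derivative of f equals φ on (0, θ₁]
  have hderiv : ∀ x ∈ Set.Ioc (0:ℝ) θ₁,
      deriv (fun x : ℝ => x * Real.log (a + c / x)) x = φ x := by
    intro x hx
    have hx0 : x ≠ 0 := ne_of_gt hx.1
    have hu1 := hub x hx
    have hune : a + c / x ≠ 0 := by linarith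
    have hqne : a * x + c ≠ 0 := ne_of_gt (hq x hx)
    have h1 : HasDerivAt (fun y : ℝ => a + c / y) (c * (-(x ^ 2)⁻¹)) x := by
      simpa [div_eq_mul_inv] using
        ((hasDerivAt_inv hx0).const_mul c).const_add a
    have h2 : HasDerivAt (fun y : ℝ => Real.log (a + c / y))
        (c * (-(x ^ 2)⁻¹) / (a + c / x)) x := h1.log hune
    have h3 : HasDerivAt (fun y : ℝ => y * Real.log (a + c / y))
        (1 * Real.log (a + c / x) + x * (c * (-(x ^ 2)⁻¹) / (a + c / x))) x :=
      (hasDerivAt_id x).mul h2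
    rw [h3.deriv, hφ_def]
    have : x * (c * (-(x ^ 2)⁻¹) / (a + c / x)) = -(c / (a * x + c)) := by
      field_simp
    rw [this]; ring
  -- continuity of φ
  have hcont : ContinuousOn φ (Set.Ioc 0 θ₁) := by
    apply ContinuousOn.sub
    · apply ContinuousOn.log
      · exact continuousOn_const.add
          (continuousOn_const.div continuousOn_id (fun x hx => ne_of_gt hx.1))
      · intro x hx
        have := hub x hx
        intro h; rw [h] at this; linarith
    · exact continuousOn_const.div
        ((continuousOn_const.mul continuousOn_id).add continuousOn_const)
        (fun x hx => ne_of_gt (hq x hx))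
  -- φ is strictly decreasing
  have hanti : StrictAntiOn φ (Set.Ioc 0 θ₁) := by
    apply strictAntiOn_of_deriv_neg (convex_Ioc 0 θ₁) hcont
    intro x hx
    rw [interior_Ioc] at hx
    have hx' : x ∈ Set.Ioc (0:ℝ) θ₁ := ⟨hx.1, hx.2.le⟩
    have hx0 : x ≠ 0 := ne_of_gt hx.1
    have hu1 := hub x hx'
    have hune : a + c / x ≠ 0 := by linarith
    have hqpos := hq x hx'
    have hqne : a * x + c ≠ 0 := ne_of_gt hqpos
    have h1 : HasDerivAt (fun y : ℝ => a + c / y) (c * (-(x ^ 2)⁻¹)) x := by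
      simpa [div_eq_mul_inv] using
        ((hasDerivAt_inv hx0).const_mul c).const_add a
    have h2 : HasDerivAt (fun y : ℝ => Real.log (a + c / y))
        (c * (-(x ^ 2)⁻¹) / (a + c / x)) x := h1.log hune
    have h4 : HasDerivAt (fun y : ℝ => a * y + c) a x := by
      simpa using ((hasDerivAt_id x).const_mul a).add_const c
    have h5 : HasDerivAt (fun y : ℝ => c / (a * y + c))
        (c * (-a / (a * x + c) ^ 2)) x := by
      simpa [div_eq_mul_inv] using ((h4.inv hqne).const_mul c)
    have h6 : HasDerivAt φ
        (c * (-(x ^ 2)⁻¹) / (a + c / x) - c * (-a / (a * x + c) ^ 2)) x :=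
      h2.sub h5
    rw [h6.deriv]
    have key : c * (-(x ^ 2)⁻¹) / (a + c / x) - c * (-a / (a * x + c) ^ 2)
        = -(c ^ 2 / (x * (a * x + c) ^ 2)) := by
      field_simp
      ring
    rw [key]
    have hxpos : 0 < x := hx.1
    have : 0 < c ^ 2 / (x * (a * x + c) ^ 2) := by positivity
    linarith
  -- value at θ₁
  have hφθ : φ θ₁ = -κ₁ := by
    have h1 : a + c / θ₁ = 1 := by rw [hcθ, ha_def]; ring
    have h2 : c / (a * θ₁ + c) = κ₁ := by rw [haθ, hcθ]
    rw [hφ_def]; simp only [h1, h2, Real.log_one]; ring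
  -- choose ε with φ ε > 0
  set M : ℝ := c / min c θ₁ with hM_def
  have hMpos : 0 < M := by have : 0 < min c θ₁ := lt_min hc hθpos; positivity
  have ha1 : a < 1 := by rw [ha_def]; linarith
  have hexp : a < Real.exp M := lt_of_lt_of_le ha1 (by
    have := Real.add_one_le_exp M; linarith)
  set ε : ℝ := min θ₁ (c / (Real.exp M - a)) / 2 with hε_def
  have hεpos : 0 < ε := by
    have : 0 < Real.exp M - a := by linarith
    have h2 : 0 < c / (Real.exp M - a) := by positivity
    have h3 : 0 < min θ₁ (c / (Real.exp M - a)) := lt_min hθpos h2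
    rw [hε_def]
    linarith
  have hεθ : ε < θ₁ := by
    rw [hε_def]
    have : min θ₁ (c / (Real.exp M - a)) ≤ θ₁ := min_le_left _ _
    linarith
  have hεIoc : ε ∈ Set.Ioc (0:ℝ) θ₁ := ⟨hεpos, hεθ.le⟩
  have hφε : 0 < φ ε := by
    have hEa : 0 < Real.exp M - a := by linarith
    have hlt : ε < c / (Real.exp M - a) := by
      rw [hε_def]
      have h1 : min θ₁ (c / (Real.exp M - a)) ≤ c / (Real.exp M - a) :=
        min_le_right _ _
      have h2 : 0 < c / (Real.exp M - a) := by positivity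
      linarith
    have hcε : Real.exp M - a < c / ε := by
      rw [lt_div_iff₀ hεpos]
      rw [lt_div_iff₀ hEa] at hlt
      nlinarith [hlt]
    have hlog : M < Real.log (a + c / ε) := by
      rw [Real.lt_log_iff_exp_lt (by linarith [hub ε hεIoc])]
      linarith
    have hbound : c / (a * ε + c) ≤ M := by
      have hmin : min c θ₁ ≤ a * ε + c := by
        rcases le_or_gt 0 a with h | h
        · have : c ≤ a * ε + c := by nlinarith [hεpos]
          exact le_trans (min_le_left _ _) this
        · have : θ₁ ≤ a * ε + c := by nlinarith [hεθ.le]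
          exact le_trans (min_le_right _ _) this
      rw [hM_def]
      gcongr
    rw [hφ_def]
    simp only
    linarith
  -- IVT
  have hIcc : Set.Icc ε θ₁ ⊆ Set.Ioc (0:ℝ) θ₁ := by
    intro y hy; exact ⟨lt_of_lt_of_le hεpos hy.1, hy.2⟩
  have hIVT := intermediate_value_Ioo' hεθ.le (hcont.mono hIcc)
  have h0mem : (0:ℝ) ∈ Set.Ioo (φ θ₁) (φ ε) := by
    rw [hφθ]; exact ⟨by linarith, hφε⟩
  obtain ⟨x, hxmem, hφx⟩ := hIVT h0mem
  have hxIoc : x ∈ Set.Ioc (0:ℝ) θ₁ := ⟨lt_trans hεpos hxmem.1, hxmem.2.le⟩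
  refine ⟨x, ⟨⟨hxIoc.1, hxmem.2⟩, ?_⟩, ?_⟩
  · rw [hderiv x hxIoc]; exact hφx
  · rintro y ⟨hy, hdy⟩
    have hyIoc : y ∈ Set.Ioc (0:ℝ) θ₁ := ⟨hy.1, hy.2.le⟩
    have hφy : φ y = 0 := by rw [← hderiv y hyIoc]; exact hdy
    exact hanti.injOn hyIoc hxIoc (by rw [hφy, hφx])
end

section
/- Let κ₁, κ₂ be real numbers with κ₁ > 0 and κ₂ < κ₁, set θ₁ = (κ₁ − κ₂)/κ₁, and define f(x) = x · ln(1 − κ₁ + (κ₁ − κ₂)/x), with the convention f(0) = 0. Let θ₀ be a real number with θ₀ ≤ min{1, θ₁}, let x* ∈ (0, θ₁) satisfy f′(x*) = 0, and set α* = min{1, max{x*, θ₀}}. Then α* lies in the interval [max{0, θ₀}, min{1, θ₁}], and for every α with max{0, θ₀} ≤ α ≤ min{1, θ₁} one has f(α) ≤ f(α*). -/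
/-!
Write `c = κ₁ - κ₂`. On `(0, θ₁]` the argument of the logarithm is at least `1`, so `f ≥ 0` there,
and `f' x = log (1 - κ₁ + c / x) - c / ((1 - κ₁) x + c)` has derivative
`-c² / (x ((1 - κ₁) x + c)²) ≤ 0`. Hence `f'` is antitone and vanishes at `x*`, so `f` increases on
`[0, x*]` (at `0` because `f 0 = 0 ≤ f`) and decreases on `[x*, θ₁]`. The maximum of such a function
over a subinterval is attained at the projection of `x*` onto it, and that projection is `α*`.
-/

open Real Set

theorem le_apply_max_min_of_monotoneOn_of_antitoneOn {α β : Type*} [LinearOrder α] [Preorder β]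
    {f : α → β} {a b m lo hi x : α}
    (hmono : MonotoneOn f (Icc a m)) (hanti : AntitoneOn f (Icc m b))
    (ha : a ≤ lo) (hb : hi ≤ b) (hx : x ∈ Icc lo hi) :
    f x ≤ f (max lo (min hi m)) := by
  obtain ⟨hlo, hhi⟩ := hx
  rcases le_total m lo with hm | hm
  · rw [max_eq_left ((min_le_right _ _).trans hm)]
    exact hanti ⟨hm, (hlo.trans hhi).trans hb⟩ ⟨hm.trans hlo, hhi.trans hb⟩ hlo
  rcases le_total hi m with hm' | hm'
  · rw [min_eq_left hm', max_eq_right (hlo.trans hhi)]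
    exact hmono ⟨ha.trans hlo, hhi.trans hm'⟩ ⟨ha.trans (hlo.trans hhi), hm'⟩ hhi
  rw [min_eq_right hm', max_eq_right hm]
  rcases le_total x m with hxm | hxm
  · exact hmono ⟨ha.trans hlo, hxm⟩ ⟨ha.trans hm, le_rfl⟩ hxm
  · exact hanti ⟨le_rfl, hm'.trans hb⟩ ⟨hxm, hhi.trans hb⟩ hxm

namespace TimeSharing

noncomputable def rate (κ₁ κ₂ x : ℝ) : ℝ := x * log (1 - κ₁ + (κ₁ - κ₂) / x)

noncomputable def rateDeriv (κ₁ κ₂ x : ℝ) : ℝ :=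
  log (1 - κ₁ + (κ₁ - κ₂) / x) - (κ₁ - κ₂) / ((1 - κ₁) * x + (κ₁ - κ₂))

variable {κ₁ κ₂ x : ℝ}

theorem one_le_sub_add_div (hκ₁ : 0 < κ₁) (hx : x ∈ Ioc 0 ((κ₁ - κ₂) / κ₁)) :
    1 ≤ 1 - κ₁ + (κ₁ - κ₂) / x := by
  have : κ₁ ≤ (κ₁ - κ₂) / x := (le_div_iff₀ hx.1).2 (by linarith [(le_div_iff₀' hκ₁).1 hx.2])
  linarith

theorem rate_nonneg (hκ₁ : 0 < κ₁) (hx : x ∈ Ioc 0 ((κ₁ - κ₂) / κ₁)) : 0 ≤ rate κ₁ κ₂ x :=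
  mul_nonneg hx.1.le (log_nonneg (one_le_sub_add_div hκ₁ hx))

theorem hasDerivAt_rate (hx : x ≠ 0) (hA : 1 - κ₁ + (κ₁ - κ₂) / x ≠ 0) :
    HasDerivAt (rate κ₁ κ₂) (rateDeriv κ₁ κ₂ x) x := by
  have hinv := ((hasDerivAt_inv hx).const_mul (κ₁ - κ₂)).const_add (1 - κ₁)
  simp only [← div_eq_mul_inv] at hinv
  refine ((hasDerivAt_id' x).mul (hinv.log hA)).congr_deriv ?_
  have hL : (1 - κ₁) * x + (κ₁ - κ₂) = x * (1 - κ₁ + (κ₁ - κ₂) / x) := by field_simp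
  rw [rateDeriv, hL]
  field_simp
  ring

theorem hasDerivAt_rateDeriv (hx : x ≠ 0) (hA : 1 - κ₁ + (κ₁ - κ₂) / x ≠ 0) :
    HasDerivAt (rateDeriv κ₁ κ₂) (-(κ₁ - κ₂) ^ 2 / (x * ((1 - κ₁) * x + (κ₁ - κ₂)) ^ 2)) x := by
  have hinv := ((hasDerivAt_inv hx).const_mul (κ₁ - κ₂)).const_add (1 - κ₁)
  simp only [← div_eq_mul_inv] at hinv
  have hL : (1 - κ₁) * x + (κ₁ - κ₂) = x * (1 - κ₁ + (κ₁ - κ₂) / x) := by field_simp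
  have hlin := ((hasDerivAt_id' x).const_mul (1 - κ₁)).add_const (κ₁ - κ₂)
  refine ((hinv.log hA).sub ((hasDerivAt_const x (κ₁ - κ₂)).div hlin
    (by rw [hL]; exact mul_ne_zero hx hA))).congr_deriv ?_
  rw [hL]
  field_simp
  ring

theorem hasDerivAt_rate_of_mem (hκ₁ : 0 < κ₁) (hx : x ∈ Ioc 0 ((κ₁ - κ₂) / κ₁)) :
    HasDerivAt (rate κ₁ κ₂) (rateDeriv κ₁ κ₂ x) x :=
  hasDerivAt_rate hx.1.ne' (one_pos.trans_le (one_le_sub_add_div hκ₁ hx)).ne'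

theorem rateDeriv_antitoneOn (hκ₁ : 0 < κ₁) :
    AntitoneOn (rateDeriv κ₁ κ₂) (Ioc 0 ((κ₁ - κ₂) / κ₁)) := by
  have hderiv {x} (hx : x ∈ Ioc 0 ((κ₁ - κ₂) / κ₁)) := hasDerivAt_rateDeriv hx.1.ne'
    (one_pos.trans_le (one_le_sub_add_div hκ₁ hx)).ne'
  refine antitoneOn_of_hasDerivWithinAt_nonpos (convex_Ioc _ _)
    (fun x hx => (hderiv hx).continuousAt.continuousWithinAt)
    (fun x hx => (hderiv (interior_subset hx)).hasDerivWithinAt) fun x hx => ?_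
  have hx0 : 0 < x := (interior_subset hx : x ∈ Ioc _ _).1
  exact div_nonpos_of_nonpos_of_nonneg (neg_nonpos.2 (sq_nonneg _))
    (mul_nonneg hx0.le (sq_nonneg _))

variable {m : ℝ}

theorem rate_monotoneOn (hκ₁ : 0 < κ₁) (hm : m ∈ Ioc 0 ((κ₁ - κ₂) / κ₁))
    (hcrit : rateDeriv κ₁ κ₂ m = 0) : MonotoneOn (rate κ₁ κ₂) (Icc 0 m) := by
  have hsub : Ioc 0 m ⊆ Ioc 0 ((κ₁ - κ₂) / κ₁) := Ioc_subset_Ioc_right hm.2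
  have hIoc : MonotoneOn (rate κ₁ κ₂) (Ioc 0 m) :=
    monotoneOn_of_hasDerivWithinAt_nonneg (convex_Ioc 0 m)
      (fun x hx => (hasDerivAt_rate_of_mem hκ₁ (hsub hx)).continuousAt.continuousWithinAt)
      (fun x hx => (hasDerivAt_rate_of_mem hκ₁ (hsub (interior_subset hx))).hasDerivWithinAt)
      fun x hx => hcrit ▸ rateDeriv_antitoneOn hκ₁ (hsub (interior_subset hx)) hm
        (interior_subset hx : x ∈ Ioc 0 m).2
  rw [← Ioc_insert_left hm.1.le]
  exact monotoneOn_insert_iff.2 ⟨fun b hb hb0 => absurd hb.1 hb0.not_gt,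
    fun b hb _ => (zero_mul _).trans_le (rate_nonneg hκ₁ (hsub hb)), hIoc⟩

theorem rate_antitoneOn (hκ₁ : 0 < κ₁) (hm : 0 < m) (hcrit : rateDeriv κ₁ κ₂ m = 0) :
    AntitoneOn (rate κ₁ κ₂) (Icc m ((κ₁ - κ₂) / κ₁)) := by
  have hsub : Icc m ((κ₁ - κ₂) / κ₁) ⊆ Ioc 0 ((κ₁ - κ₂) / κ₁) :=
    fun x hx => ⟨hm.trans_le hx.1, hx.2⟩
  exact antitoneOn_of_hasDerivWithinAt_nonpos (convex_Icc _ _)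
    (fun x hx => (hasDerivAt_rate_of_mem hκ₁ (hsub hx)).continuousAt.continuousWithinAt)
    (fun x hx => (hasDerivAt_rate_of_mem hκ₁ (hsub (interior_subset hx))).hasDerivWithinAt)
    fun x hx => by
      obtain ⟨hmx, hxθ⟩ : x ∈ Icc m ((κ₁ - κ₂) / κ₁) := interior_subset hx
      exact hcrit ▸ rateDeriv_antitoneOn hκ₁ (hsub ⟨le_rfl, hmx.trans hxθ⟩) (hsub ⟨hmx, hxθ⟩) hmx

end TimeSharing

open TimeSharing in
theorem optimal_time_sharing_general
    (κ₁ κ₂ : ℝ) (hκ₁ : 0 < κ₁)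
    (θ₁ : ℝ) (hθ₁ : θ₁ = (κ₁ - κ₂) / κ₁)
    (θ₀ : ℝ) (hθ₀ : θ₀ ≤ min 1 θ₁)
    (xstar : ℝ) (hxstar : xstar ∈ Set.Ioo 0 θ₁)
    (hcrit : deriv (fun x : ℝ => x * Real.log (1 - κ₁ + (κ₁ - κ₂) / x)) xstar = 0)
    (αstar : ℝ) (hαstar : αstar = min 1 (max xstar θ₀)) :
    αstar ∈ Set.Icc (max 0 θ₀) (min 1 θ₁) ∧
      ∀ α : ℝ, max 0 θ₀ ≤ α → α ≤ min 1 θ₁ →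
        α * Real.log (1 - κ₁ + (κ₁ - κ₂) / α)
          ≤ αstar * Real.log (1 - κ₁ + (κ₁ - κ₂) / αstar) := by
  subst hθ₁ hαstar
  obtain ⟨hx0, hxθ⟩ := hxstar
  have hcrit' : rateDeriv κ₁ κ₂ xstar = 0 := by
    rw [← (hasDerivAt_rate_of_mem hκ₁ ⟨hx0, hxθ.le⟩).deriv]
    exact hcrit
  have hlohi : max 0 θ₀ ≤ min 1 ((κ₁ - κ₂) / κ₁) :=
    max_le (le_min zero_le_one (hx0.trans hxθ).le) hθ₀
  have hclamp : min 1 (max xstar θ₀) =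
      max (max 0 θ₀) (min (min 1 ((κ₁ - κ₂) / κ₁)) xstar) := by
    obtain ⟨hθ₀_le_one, hθ₀_le_θ₁⟩ := le_min_iff.1 hθ₀
    simp only [max_def, min_def]
    split_ifs <;> linarith
  rw [hclamp]
  exact ⟨⟨le_max_left _ _, max_le hlohi (min_le_left _ _)⟩, fun α hlo hhi =>
    le_apply_max_min_of_monotoneOn_of_antitoneOn (rate_monotoneOn hκ₁ ⟨hx0, hxθ.le⟩ hcrit')
      (rate_antitoneOn hκ₁ hx0 hcrit') (le_max_left _ _) (min_le_right _ _) ⟨hlo, hhi⟩⟩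

/-- Lemma 1: the optimal time-sharing coefficient is α* = min{1, max{x*, θ₀}}.
Note that `f 0 = 0 * Real.log (1 - κ₁ + (κ₁ - κ₂) / 0) = 0`, so the convention
f(0) = 0 holds automatically. -/
theorem optimal_time_sharing
    (κ₁ κ₂ : ℝ) (hκ₁ : 0 < κ₁) (hκ : κ₂ < κ₁)
    (θ₁ : ℝ) (hθ₁ : θ₁ = (κ₁ - κ₂) / κ₁)
    (θ₀ : ℝ) (hθ₀ : θ₀ ≤ min 1 θ₁)
    (xstar : ℝ) (hxstar : xstar ∈ Set.Ioo 0 θ₁)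
    (hcrit : deriv (fun x : ℝ => x * Real.log (1 - κ₁ + (κ₁ - κ₂) / x)) xstar = 0)
    (αstar : ℝ) (hαstar : αstar = min 1 (max xstar θ₀)) :
    αstar ∈ Set.Icc (max 0 θ₀) (min 1 θ₁) ∧
      ∀ α : ℝ, max 0 θ₀ ≤ α → α ≤ min 1 θ₁ →
        α * Real.log (1 - κ₁ + (κ₁ - κ₂) / α)
          ≤ αstar * Real.log (1 - κ₁ + (κ₁ - κ₂) / αstar) :=
  optimal_time_sharing_general κ₁ κ₂ hκ₁ θ₁ hθ₁ θ₀ hθ₀ xstar hxstar hcrit αstar hαstar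
end
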